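/- arXiv:1612.01913 — 2 statements merged into one kernel-verified Lean document; each statement's English description precedes it below -/
import Mathlib

section
/- If o, p, q, r is a ⊓-tetrad with diagonals a = (o ⋎ p) ∩ (q ⋎ r), b = (o ⋎ q) ∩ (r ⋎ p), c = (o ⋎ r) ∩ (p ⋎ q), then the seven lines o, p, q, r, a, b, c are pairwise distinct. -/
/-- A 'linear' framework for projective 3-space: a set of lines with an
incidence relation, together with the data of the two incidence-equivalence
classes `SigY`, `SigM` on `Σ(a,b)` and the derived points `pt` and planes `pl`. -/
structure LineGeom where
  L : Type
  dag : L → L → Prop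
  dag_refl : ∀ l, dag l l
  dag_symm : ∀ {a b}, dag a b → dag b a
  SigY : L → L → Set L
  SigM : L → L → Set L
  pt : L → L → Set L
  pl : L → L → Set L

namespace LineGeom

variable (G : LineGeom)

/-- `S†` : the lines incident to every line of `S`. -/
def perp (S : Set G.L) : Set G.L := {x | ∀ s ∈ S, G.dag x s}

/-- `Σ(a,b) = [a b] \ [a b]†`. -/
def Sig (a b : G.L) : Set G.L := G.perp {a, b} \ G.perp (G.perp {a, b})

/-- AXIOMS [1]-[4] together with the defining properties of the two classes
`Σ_⋎(a,b)`, `Σ_⊓(a,b)` and of the point `a ⋎ b` and plane `a ⊓ b`. -/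
structure Axioms : Prop where
  ax1 : ∀ l : G.L, ∃ x y z, x ∈ G.perp {l} ∧ y ∈ G.perp {l} ∧ z ∈ G.perp {l} ∧
      ¬ G.dag x y ∧ ¬ G.dag y z ∧ ¬ G.dag x z
  ax21 : ∀ a b : G.L, a ≠ b → G.dag a b →
      ∃ x ∈ G.perp {a, b}, ∃ y ∈ G.perp {a, b}, ¬ G.dag x y
  ax22 : ∀ a b : G.L, a ≠ b → G.dag a b → ∀ c ∈ G.Sig a b,
      ∀ x ∈ G.perp {a, b, c}, ∀ y ∈ G.perp {a, b, c}, G.dag x y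
  ax23 : ∀ a b : G.L, a ≠ b → G.dag a b →
      ∀ x ∈ G.perp {a, b}, ∀ y ∈ G.perp {a, b}, ¬ G.dag x y →
      G.perp {a, b} = G.perp {a, b, x} ∪ G.perp {a, b, y}
  ax3 : ∀ a b : G.L, a ≠ b → G.dag a b → ∀ c ∈ G.Sig a b,
      ∃ p q : G.L, p ≠ q ∧ G.dag p q ∧ ∃ r ∈ G.Sig p q,
        G.perp {a, b, c} ∩ G.perp {p, q, r} = ∅
  sig_union : ∀ a b : G.L, a ≠ b → G.dag a b →
      G.SigY a b ∪ G.SigM a b = G.Sig a b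
  sig_disjoint : ∀ a b : G.L, a ≠ b → G.dag a b →
      G.SigY a b ∩ G.SigM a b = ∅
  sigY_nonempty : ∀ a b : G.L, a ≠ b → G.dag a b → (G.SigY a b).Nonempty
  sigM_nonempty : ∀ a b : G.L, a ≠ b → G.dag a b → (G.SigM a b).Nonempty
  sig_class : ∀ a b : G.L, a ≠ b → G.dag a b → ∀ x ∈ G.Sig a b, ∀ y ∈ G.Sig a b,
      (((x ∈ G.SigY a b ∧ y ∈ G.SigY a b) ∨ (x ∈ G.SigM a b ∧ y ∈ G.SigM a b))
        ↔ G.dag x y)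
  sigY_symm : ∀ a b : G.L, G.SigY a b = G.SigY b a
  sigM_symm : ∀ a b : G.L, G.SigM a b = G.SigM b a
  pt_spec : ∀ a b : G.L, a ≠ b → G.dag a b → ∀ c ∈ G.SigY a b,
      G.pt a b = G.perp {a, b, c}
  pl_spec : ∀ a b : G.L, a ≠ b → G.dag a b → ∀ c ∈ G.SigM a b,
      G.pl a b = G.perp {a, b, c}
  ax4 : ∀ a b p q : G.L, a ≠ b → G.dag a b → p ≠ q → G.dag p q →
      (G.pt a b ∩ G.pt p q).Nonempty ∧ (G.pl a b ∩ G.pl p q).Nonempty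

/-- Three pairwise-incident distinct lines forming a triad. -/
def Triad (a b c : G.L) : Prop :=
  a ≠ b ∧ b ≠ c ∧ a ≠ c ∧ G.dag a b ∧ G.dag b c ∧ G.dag a c ∧
  a ∈ G.Sig b c ∧ b ∈ G.Sig c a ∧ c ∈ G.Sig a b

/-- A `⊓`-triad. -/
def MTriad (a b c : G.L) : Prop :=
  a ≠ b ∧ b ≠ c ∧ a ≠ c ∧ G.dag a b ∧ G.dag b c ∧ G.dag a c ∧
  a ∈ G.SigM b c ∧ b ∈ G.SigM c a ∧ c ∈ G.SigM a b

/-- A `⋎`-triad. -/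
def YTriad (a b c : G.L) : Prop :=
  a ≠ b ∧ b ≠ c ∧ a ≠ c ∧ G.dag a b ∧ G.dag b c ∧ G.dag a c ∧
  a ∈ G.SigY b c ∧ b ∈ G.SigY c a ∧ c ∈ G.SigY a b

/-- A `⊓`-tetrad: each of the four included triples is a `⊓`-triad. -/
def MTetrad (o p q r : G.L) : Prop :=
  G.MTriad p q r ∧ G.MTriad o q r ∧ G.MTriad o r p ∧ G.MTriad o p q

/-- A `⋎`-tetrad. -/
def YTetrad (o p q r : G.L) : Prop :=
  G.YTriad p q r ∧ G.YTriad o q r ∧ G.YTriad o r p ∧ G.YTriad o p q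

/-- A point: a set of lines of the form `x ⋎ y`. -/
def IsPoint (X : Set G.L) : Prop := ∃ x y : G.L, x ≠ y ∧ G.dag x y ∧ X = G.pt x y

/-- A plane: a set of lines of the form `x ⊓ y`. -/
def IsPlane (X : Set G.L) : Prop := ∃ x y : G.L, x ≠ y ∧ G.dag x y ∧ X = G.pl x y

end LineGeom

namespace LineGeom

variable {G : LineGeom}

lemma mem_perp3 {x y c z : G.L} :
    z ∈ G.perp {x, y, c} ↔ G.dag z x ∧ G.dag z y ∧ G.dag z c := by
  simp [perp]

lemma mem_perp2 {x y z : G.L} :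
    z ∈ G.perp {x, y} ↔ G.dag z x ∧ G.dag z y := by
  simp [perp]

lemma sigY_subset_sig (hG : G.Axioms) {x y : G.L} (hne : x ≠ y) (hd : G.dag x y) :
    G.SigY x y ⊆ G.Sig x y := by
  rw [← hG.sig_union x y hne hd]; exact Set.subset_union_left

lemma sigM_subset_sig (hG : G.Axioms) {x y : G.L} (hne : x ≠ y) (hd : G.dag x y) :
    G.SigM x y ⊆ G.Sig x y := by
  rw [← hG.sig_union x y hne hd]; exact Set.subset_union_right

lemma not_dag_YM (hG : G.Axioms) {x y z w : G.L} (hne : x ≠ y) (hd : G.dag x y)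
    (hz : z ∈ G.SigY x y) (hw : w ∈ G.SigM x y) : ¬ G.dag z w := by
  intro hzw
  have hzS := sigY_subset_sig hG hne hd hz
  have hwS := sigM_subset_sig hG hne hd hw
  have hcl := (hG.sig_class x y hne hd z hzS w hwS).2 hzw
  have hdis := hG.sig_disjoint x y hne hd
  rcases hcl with ⟨_, hwY⟩ | ⟨hzM, _⟩
  · exact Set.eq_empty_iff_forall_notMem.mp hdis w ⟨hwY, hw⟩
  · exact Set.eq_empty_iff_forall_notMem.mp hdis z ⟨hz, hzM⟩

lemma left_mem_pt (hG : G.Axioms) {x y : G.L} (hne : x ≠ y) (hd : G.dag x y) :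
    x ∈ G.pt x y := by
  obtain ⟨cY, hc⟩ := hG.sigY_nonempty x y hne hd
  rw [hG.pt_spec x y hne hd cY hc]
  have hcp := mem_perp2.1 (sigY_subset_sig hG hne hd hc).1
  exact mem_perp3.2 ⟨G.dag_refl x, hd, G.dag_symm hcp.1⟩

lemma right_mem_pt (hG : G.Axioms) {x y : G.L} (hne : x ≠ y) (hd : G.dag x y) :
    y ∈ G.pt x y := by
  obtain ⟨cY, hc⟩ := hG.sigY_nonempty x y hne hd
  rw [hG.pt_spec x y hne hd cY hc]
  have hcp := mem_perp2.1 (sigY_subset_sig hG hne hd hc).1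
  exact mem_perp3.2 ⟨G.dag_symm hd, G.dag_refl y, G.dag_symm hcp.2⟩

lemma pt_clique (hG : G.Axioms) {x y : G.L} (hne : x ≠ y) (hd : G.dag x y) :
    ∀ z ∈ G.pt x y, ∀ w ∈ G.pt x y, G.dag z w := by
  obtain ⟨cY, hc⟩ := hG.sigY_nonempty x y hne hd
  rw [hG.pt_spec x y hne hd cY hc]
  exact hG.ax22 x y hne hd cY (sigY_subset_sig hG hne hd hc)

lemma sigM_notmem_pt (hG : G.Axioms) {x y z : G.L} (hne : x ≠ y) (hd : G.dag x y)
    (hz : z ∈ G.SigM x y) : z ∉ G.pt x y := by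
  obtain ⟨cY, hc⟩ := hG.sigY_nonempty x y hne hd
  rw [hG.pt_spec x y hne hd cY hc]
  intro hmem
  exact not_dag_YM hG hne hd hc hz (G.dag_symm (mem_perp3.1 hmem).2.2)

/-- A "point flat" is never equal to a "plane flat". -/
lemma perpY_ne_perpM (hG : G.Axioms) {x y c1 u v c2 : G.L}
    (hxy : x ≠ y) (hdxy : G.dag x y) (huv : u ≠ v) (hduv : G.dag u v)
    (h1 : c1 ∈ G.SigY x y) (h2 : c2 ∈ G.SigM u v) :
    G.perp {x, y, c1} ≠ G.perp {u, v, c2} := by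
  intro heq
  obtain ⟨p, q, hpq, hdpq, r, hr, hdisj⟩ :=
    hG.ax3 x y hxy hdxy c1 (sigY_subset_sig hG hxy hdxy h1)
  have hr' : r ∈ G.SigY p q ∪ G.SigM p q := by
    rw [hG.sig_union p q hpq hdpq]; exact hr
  rcases hr' with hrY | hrM
  · obtain ⟨w, hw⟩ := (hG.ax4 x y p q hxy hdxy hpq hdpq).1
    rw [hG.pt_spec x y hxy hdxy c1 h1, hG.pt_spec p q hpq hdpq r hrY] at hw
    exact Set.eq_empty_iff_forall_notMem.mp hdisj w hw
  · obtain ⟨w, hw⟩ := (hG.ax4 u v p q huv hduv hpq hdpq).2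
    rw [hG.pl_spec u v huv hduv c2 h2, hG.pl_spec p q hpq hdpq r hrM, ← heq] at hw
    exact Set.eq_empty_iff_forall_notMem.mp hdisj w hw

/-- Two distinct lines of a point determine that point. -/
lemma pt_eq_pt (hG : G.Axioms) {x y u v : G.L} (hne : x ≠ y) (hd : G.dag x y)
    (hu : u ∈ G.pt x y) (hv : v ∈ G.pt x y) (huv : u ≠ v) :
    G.pt x y = G.pt u v := by
  obtain ⟨cY, hcY⟩ := hG.sigY_nonempty x y hne hd
  have hpt := hG.pt_spec x y hne hd cY hcY
  have hcp := mem_perp2.1 (sigY_subset_sig hG hne hd hcY).1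
  have hx : x ∈ G.pt x y := left_mem_pt hG hne hd
  have hy : y ∈ G.pt x y := right_mem_pt hG hne hd
  have hcm : cY ∈ G.pt x y := by
    rw [hpt]; exact mem_perp3.2 ⟨hcp.1, hcp.2, G.dag_refl cY⟩
  have clique := pt_clique hG hne hd
  have hduv : G.dag u v := clique u hu v hv
  obtain ⟨w1, hw1, w2, hw2, hw12⟩ := hG.ax21 u v huv hduv
  have key : ∃ c' ∈ G.pt x y, c' ∈ G.Sig u v := by
    by_cases h1 : ∀ z ∈ G.pt x y, G.dag z w1
    · by_cases h2 : ∀ z ∈ G.pt x y, G.dag z w2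
      · exfalso
        have hw1m : w1 ∈ G.pt x y := by
          rw [hpt]
          exact mem_perp3.2 ⟨G.dag_symm (h1 x hx), G.dag_symm (h1 y hy),
            G.dag_symm (h1 cY hcm)⟩
        have hw2m : w2 ∈ G.pt x y := by
          rw [hpt]
          exact mem_perp3.2 ⟨G.dag_symm (h2 x hx), G.dag_symm (h2 y hy),
            G.dag_symm (h2 cY hcm)⟩
        exact hw12 (clique w1 hw1m w2 hw2m)
      · push_neg at h2
        obtain ⟨z, hz, hzw⟩ := h2
        refine ⟨z, hz, ⟨mem_perp2.2 ⟨clique z hz u hu, clique z hz v hv⟩, ?_⟩⟩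
        intro hmem
        exact hzw (hmem w2 hw2)
    · push_neg at h1
      obtain ⟨z, hz, hzw⟩ := h1
      refine ⟨z, hz, ⟨mem_perp2.2 ⟨clique z hz u hu, clique z hz v hv⟩, ?_⟩⟩
      intro hmem
      exact hzw (hmem w1 hw1)
  obtain ⟨c', hc'P, hc'S⟩ := key
  have hsub1 : G.pt x y ⊆ G.perp {u, v, c'} := fun z hz =>
    mem_perp3.2 ⟨clique z hz u hu, clique z hz v hv, clique z hz c' hc'P⟩
  have clique2 := hG.ax22 u v huv hduv c' hc'S
  have hsub2 : G.perp {u, v, c'} ⊆ G.pt x y := by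
    intro z hz
    rw [hpt]
    exact mem_perp3.2 ⟨clique2 z hz x (hsub1 hx), clique2 z hz y (hsub1 hy),
      clique2 z hz cY (hsub1 hcm)⟩
  have heq : G.pt x y = G.perp {u, v, c'} := Set.Subset.antisymm hsub1 hsub2
  have hc'' : c' ∈ G.SigY u v ∪ G.SigM u v := by
    rw [hG.sig_union u v huv hduv]; exact hc'S
  rcases hc'' with hY | hM
  · rw [hG.pt_spec u v huv hduv c' hY]; exact heq
  · exact absurd (hpt.symm.trans heq)
      (perpY_ne_perpM hG hne hd huv hduv hcY hM)

end LineGeom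

open LineGeom

/-- A `⊓`-tetrad and its three diagonals form seven pairwise
distinct lines. -/
theorem stmt_4 (G : LineGeom) (hG : G.Axioms) (o p q r a b c : G.L)
    (hT : G.MTetrad o p q r)
    (ha : G.pt o p ∩ G.pt q r = {a})
    (hb : G.pt o q ∩ G.pt r p = {b})
    (hc : G.pt o r ∩ G.pt p q = {c}) :
    List.Pairwise (· ≠ ·) [o, p, q, r, a, b, c] := by
  obtain ⟨T1, T2, T3, T4⟩ := hT
  -- distinctness and incidence among o p q r
  have hop : o ≠ p := T4.1
  have dop : G.dag o p := T4.2.2.2.1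
  have hoq : o ≠ q := T4.2.2.1
  have doq : G.dag o q := T4.2.2.2.2.2.1
  have hor : o ≠ r := T2.2.2.1
  have dor : G.dag o r := T2.2.2.2.2.2.1
  have hpq : p ≠ q := T4.2.1
  have dpq : G.dag p q := T4.2.2.2.2.1
  have hpr : p ≠ r := T1.2.2.1
  have dpr : G.dag p r := T1.2.2.2.2.2.1
  have hqr : q ≠ r := T1.2.1
  have dqr : G.dag q r := T1.2.2.2.2.1
  have hrp : r ≠ p := hpr.symm
  have drp : G.dag r p := G.dag_symm dpr
  -- SigM memberships
  have oMqr : o ∈ G.SigM q r := T2.2.2.2.2.2.2.1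
  have pMqr : p ∈ G.SigM q r := T1.2.2.2.2.2.2.1
  have qMop : q ∈ G.SigM o p := T4.2.2.2.2.2.2.2.2
  have rMop : r ∈ G.SigM o p := by
    have h := T3.2.2.2.2.2.2.2.1
    rwa [hG.sigM_symm p o] at h
  have oMrp : o ∈ G.SigM r p := T3.2.2.2.2.2.2.1
  have qMrp : q ∈ G.SigM r p := T1.2.2.2.2.2.2.2.1
  have rMoq : r ∈ G.SigM o q := T2.2.2.2.2.2.2.2.2
  have pMoq : p ∈ G.SigM o q := by
    have h := T4.2.2.2.2.2.2.2.1
    rwa [hG.sigM_symm q o] at h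
  have oMpq : o ∈ G.SigM p q := T4.2.2.2.2.2.2.1
  have pMor : p ∈ G.SigM o r := T3.2.2.2.2.2.2.2.2
  have qMor : q ∈ G.SigM o r := by
    have h := T2.2.2.2.2.2.2.2.1
    rwa [hG.sigM_symm r o] at h
  have rMpq : r ∈ G.SigM p q := T1.2.2.2.2.2.2.2.2
  -- the diagonals belong to the indicated points
  have haa : a ∈ G.pt o p ∩ G.pt q r := by rw [ha]; rfl
  have hbb : b ∈ G.pt o q ∩ G.pt r p := by rw [hb]; rfl
  have hcc : c ∈ G.pt o r ∩ G.pt p q := by rw [hc]; rfl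
  have haP : a ∈ G.pt o p := haa.1
  have haQ : a ∈ G.pt q r := haa.2
  have hbP : b ∈ G.pt o q := hbb.1
  have hbQ : b ∈ G.pt r p := hbb.2
  have hcP : c ∈ G.pt o r := hcc.1
  have hcQ : c ∈ G.pt p q := hcc.2
  -- the diagonals are distinct from the sides
  have ne_ao : a ≠ o := by rintro rfl; exact sigM_notmem_pt hG hqr dqr oMqr haQ
  have ne_ap : a ≠ p := by rintro rfl; exact sigM_notmem_pt hG hqr dqr pMqr haQ
  have ne_aq : a ≠ q := by rintro rfl; exact sigM_notmem_pt hG hop dop qMop haP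
  have ne_ar : a ≠ r := by rintro rfl; exact sigM_notmem_pt hG hop dop rMop haP
  have ne_bo : b ≠ o := by rintro rfl; exact sigM_notmem_pt hG hrp drp oMrp hbQ
  have ne_bp : b ≠ p := by rintro rfl; exact sigM_notmem_pt hG hoq doq pMoq hbP
  have ne_bq : b ≠ q := by rintro rfl; exact sigM_notmem_pt hG hrp drp qMrp hbQ
  have ne_br : b ≠ r := by rintro rfl; exact sigM_notmem_pt hG hoq doq rMoq hbP
  have ne_co : c ≠ o := by rintro rfl; exact sigM_notmem_pt hG hpq dpq oMpq hcQ
  have ne_cp : c ≠ p := by rintro rfl; exact sigM_notmem_pt hG hor dor pMor hcP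
  have ne_cq : c ≠ q := by rintro rfl; exact sigM_notmem_pt hG hor dor qMor hcP
  have ne_cr : c ≠ r := by rintro rfl; exact sigM_notmem_pt hG hpq dpq rMpq hcQ
  -- the diagonals are pairwise distinct
  have ne_ab : a ≠ b := by
    rintro rfl
    have e1 : G.pt o p = G.pt a p :=
      pt_eq_pt hG hop dop haP (right_mem_pt hG hop dop) ne_ap
    have e2 : G.pt r p = G.pt a p :=
      pt_eq_pt hG hrp drp hbQ (right_mem_pt hG hrp drp) ne_ap
    have : o ∈ G.pt r p := by
      rw [e2, ← e1]; exact left_mem_pt hG hop dop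
    exact sigM_notmem_pt hG hrp drp oMrp this
  have ne_ac : a ≠ c := by
    rintro rfl
    have e1 : G.pt o p = G.pt a p :=
      pt_eq_pt hG hop dop haP (right_mem_pt hG hop dop) ne_ap
    have e2 : G.pt p q = G.pt a p :=
      pt_eq_pt hG hpq dpq hcQ (left_mem_pt hG hpq dpq) ne_ap
    have : o ∈ G.pt p q := by
      rw [e2, ← e1]; exact left_mem_pt hG hop dop
    exact sigM_notmem_pt hG hpq dpq oMpq this
  have ne_bc : b ≠ c := by
    rintro rfl
    have e1 : G.pt o q = G.pt b q :=
      pt_eq_pt hG hoq doq hbP (right_mem_pt hG hoq doq) ne_bq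
    have e2 : G.pt p q = G.pt b q :=
      pt_eq_pt hG hpq dpq hcQ (right_mem_pt hG hpq dpq) ne_bq
    have : o ∈ G.pt p q := by
      rw [e2, ← e1]; exact left_mem_pt hG hoq doq
    exact sigM_notmem_pt hG hpq dpq oMpq this
  simp only [List.pairwise_cons, List.mem_cons, List.mem_singleton,
    List.not_mem_nil, forall_eq_or_imp, forall_eq]
  refine ⟨⟨hop, hoq, hor, ne_ao.symm, ne_bo.symm, ne_co.symm, ?_⟩,
    ⟨hpq, hpr, ne_ap.symm, ne_bp.symm, ne_cp.symm, ?_⟩,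
    ⟨hqr, ne_aq.symm, ne_bq.symm, ne_cq.symm, ?_⟩,
    ⟨ne_ar.symm, ne_br.symm, ne_cr.symm, ?_⟩,
    ⟨ne_ab, ne_ac, ?_⟩, ⟨ne_bc, ?_⟩, ?_, ?_⟩ <;>
  first
    | exact fun _ h => h.elim
    | exact List.Pairwise.nil
end

section
/- Assuming Axiom [H_⊓] (the diagonals of every ⊓-tetrad form a ⊓-triad), the diagonals of every ⋎-tetrad form a ⋎-triad; that is, [H_⊓] implies [H_⋎]. -/
open LineGeom

/-- Axiom [H_⊓]: the diagonals of every `⊓`-tetrad form a `⊓`-triad. -/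
def LineGeom.HM (G : LineGeom) : Prop :=
  ∀ o p q r a b c : G.L, G.MTetrad o p q r →
    G.pt o p ∩ G.pt q r = {a} →
    G.pt o q ∩ G.pt r p = {b} →
    G.pt o r ∩ G.pt p q = {c} →
    G.MTriad a b c

/-- Axiom [H_⋎]: the diagonals of every `⋎`-tetrad form a `⋎`-triad. -/
def LineGeom.HY (G : LineGeom) : Prop :=
  ∀ o p q r a b c : G.L, G.YTetrad o p q r →
    G.pl o p ∩ G.pl q r = {a} →
    G.pl o q ∩ G.pl r p = {b} →
    G.pl o r ∩ G.pl p q = {c} →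
    G.YTriad a b c

namespace LineGeom

variable {G : LineGeom}

lemma mem_perp_pair {x a b : G.L} : x ∈ G.perp {a, b} ↔ G.dag x a ∧ G.dag x b := by
  simp [perp]

lemma mem_perp_triple {x a b c : G.L} :
    x ∈ G.perp {a, b, c} ↔ G.dag x a ∧ G.dag x b ∧ G.dag x c := by
  simp [perp]

lemma sig_comm (a b : G.L) : G.Sig a b = G.Sig b a := by
  rw [Sig, Sig, Set.pair_comm]

variable (hG : G.Axioms)
include hG

lemma sigY_sub {a b : G.L} (hab : a ≠ b) (dab : G.dag a b) : G.SigY a b ⊆ G.Sig a b := by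
  rw [← hG.sig_union a b hab dab]; exact Set.subset_union_left

lemma sigM_sub {a b : G.L} (hab : a ≠ b) (dab : G.dag a b) : G.SigM a b ⊆ G.Sig a b := by
  rw [← hG.sig_union a b hab dab]; exact Set.subset_union_right

lemma not_dag_YM_s8 {a b y m : G.L} (hab : a ≠ b) (dab : G.dag a b)
    (hy : y ∈ G.SigY a b) (hm : m ∈ G.SigM a b) : ¬ G.dag y m := by
  intro hd
  have hcl := (hG.sig_class a b hab dab y (sigY_sub hG hab dab hy) m
    (sigM_sub hG hab dab hm)).mpr hd
  have hdisj := hG.sig_disjoint a b hab dab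
  rcases hcl with ⟨_, h2⟩ | ⟨h1, _⟩
  · exact absurd (Set.mem_inter h2 hm) (by rw [hdisj]; exact Set.notMem_empty m)
  · exact absurd (Set.mem_inter hy h1) (by rw [hdisj]; exact Set.notMem_empty y)

lemma pt_pair_dag {a b s t : G.L} (hab : a ≠ b) (dab : G.dag a b)
    (hs : s ∈ G.pt a b) (ht : t ∈ G.pt a b) : G.dag s t := by
  obtain ⟨y, hy⟩ := hG.sigY_nonempty a b hab dab
  rw [hG.pt_spec a b hab dab y hy] at hs ht
  exact hG.ax22 a b hab dab y (sigY_sub hG hab dab hy) s hs t ht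

lemma pl_pair_dag {a b s t : G.L} (hab : a ≠ b) (dab : G.dag a b)
    (hs : s ∈ G.pl a b) (ht : t ∈ G.pl a b) : G.dag s t := by
  obtain ⟨m, hm⟩ := hG.sigM_nonempty a b hab dab
  rw [hG.pl_spec a b hab dab m hm] at hs ht
  exact hG.ax22 a b hab dab m (sigM_sub hG hab dab hm) s hs t ht

lemma left_mem_pt_s8 {a b : G.L} (hab : a ≠ b) (dab : G.dag a b) : a ∈ G.pt a b := by
  obtain ⟨y, hy⟩ := hG.sigY_nonempty a b hab dab
  rw [hG.pt_spec a b hab dab y hy, mem_perp_triple]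
  exact ⟨G.dag_refl a, dab, G.dag_symm ((sigY_sub hG hab dab hy).1 a (by simp))⟩

lemma right_mem_pt_s8 {a b : G.L} (hab : a ≠ b) (dab : G.dag a b) : b ∈ G.pt a b := by
  obtain ⟨y, hy⟩ := hG.sigY_nonempty a b hab dab
  rw [hG.pt_spec a b hab dab y hy, mem_perp_triple]
  exact ⟨G.dag_symm dab, G.dag_refl b, G.dag_symm ((sigY_sub hG hab dab hy).1 b (by simp))⟩

lemma left_mem_pl {a b : G.L} (hab : a ≠ b) (dab : G.dag a b) : a ∈ G.pl a b := by
  obtain ⟨m, hm⟩ := hG.sigM_nonempty a b hab dab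
  rw [hG.pl_spec a b hab dab m hm, mem_perp_triple]
  exact ⟨G.dag_refl a, dab, G.dag_symm ((sigM_sub hG hab dab hm).1 a (by simp))⟩

lemma right_mem_pl {a b : G.L} (hab : a ≠ b) (dab : G.dag a b) : b ∈ G.pl a b := by
  obtain ⟨m, hm⟩ := hG.sigM_nonempty a b hab dab
  rw [hG.pl_spec a b hab dab m hm, mem_perp_triple]
  exact ⟨G.dag_symm dab, G.dag_refl b, G.dag_symm ((sigM_sub hG hab dab hm).1 b (by simp))⟩

lemma sigY_mem_pt {a b y : G.L} (hab : a ≠ b) (dab : G.dag a b)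
    (hy : y ∈ G.SigY a b) : y ∈ G.pt a b := by
  have h := (sigY_sub hG hab dab hy).1
  rw [hG.pt_spec a b hab dab y hy, mem_perp_triple]
  exact ⟨h a (by simp), h b (by simp), G.dag_refl y⟩

lemma sigM_mem_pl {a b m : G.L} (hab : a ≠ b) (dab : G.dag a b)
    (hm : m ∈ G.SigM a b) : m ∈ G.pl a b := by
  have h := (sigM_sub hG hab dab hm).1
  rw [hG.pl_spec a b hab dab m hm, mem_perp_triple]
  exact ⟨h a (by simp), h b (by simp), G.dag_refl m⟩

lemma sigY_not_mem_pl {a b y : G.L} (hab : a ≠ b) (dab : G.dag a b)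
    (hy : y ∈ G.SigY a b) : y ∉ G.pl a b := by
  obtain ⟨m, hm⟩ := hG.sigM_nonempty a b hab dab
  rw [hG.pl_spec a b hab dab m hm, mem_perp_triple]
  rintro ⟨-, -, hd⟩
  exact not_dag_YM_s8 hG hab dab hy hm hd

lemma sigM_not_mem_pt {a b m : G.L} (hab : a ≠ b) (dab : G.dag a b)
    (hm : m ∈ G.SigM a b) : m ∉ G.pt a b := by
  obtain ⟨y, hy⟩ := hG.sigY_nonempty a b hab dab
  rw [hG.pt_spec a b hab dab y hy, mem_perp_triple]
  rintro ⟨-, -, hd⟩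
  exact not_dag_YM_s8 hG hab dab hy hm (G.dag_symm hd)

lemma perp_pair_eq_union {a b : G.L} (hab : a ≠ b) (dab : G.dag a b) :
    G.perp {a, b} = G.pt a b ∪ G.pl a b := by
  obtain ⟨y, hy⟩ := hG.sigY_nonempty a b hab dab
  obtain ⟨m, hm⟩ := hG.sigM_nonempty a b hab dab
  have h := hG.ax23 a b hab dab y ((sigY_sub hG hab dab hy).1) m
    ((sigM_sub hG hab dab hm).1) (not_dag_YM_s8 hG hab dab hy hm)
  rw [hG.pt_spec a b hab dab y hy, hG.pl_spec a b hab dab m hm]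
  exact h

lemma not_mem_sig_of_both {a b x : G.L} (hab : a ≠ b) (dab : G.dag a b)
    (h1 : x ∈ G.pt a b) (h2 : x ∈ G.pl a b) : x ∉ G.Sig a b := by
  intro hs
  apply hs.2
  intro z hz
  rw [perp_pair_eq_union hG hab dab] at hz
  rcases hz with hz | hz
  · exact pt_pair_dag hG hab dab h1 hz
  · exact pl_pair_dag hG hab dab h2 hz

lemma mem_sig_of_not_pl {a b x : G.L} (hab : a ≠ b) (dab : G.dag a b)
    (hx : x ∈ G.perp {a, b}) (hnpl : x ∉ G.pl a b) : x ∈ G.Sig a b := by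
  refine ⟨hx, fun h2 => hnpl ?_⟩
  obtain ⟨m, hm⟩ := hG.sigM_nonempty a b hab dab
  rw [hG.pl_spec a b hab dab m hm, mem_perp_triple]
  have hxa := (mem_perp_pair.mp hx).1
  have hxb := (mem_perp_pair.mp hx).2
  exact ⟨hxa, hxb, h2 m ((sigM_sub hG hab dab hm).1)⟩

lemma mem_sig_of_not_pt {a b x : G.L} (hab : a ≠ b) (dab : G.dag a b)
    (hx : x ∈ G.perp {a, b}) (hnpt : x ∉ G.pt a b) : x ∈ G.Sig a b := by
  refine ⟨hx, fun h2 => hnpt ?_⟩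
  obtain ⟨y, hy⟩ := hG.sigY_nonempty a b hab dab
  rw [hG.pt_spec a b hab dab y hy, mem_perp_triple]
  have hxa := (mem_perp_pair.mp hx).1
  have hxb := (mem_perp_pair.mp hx).2
  exact ⟨hxa, hxb, h2 y ((sigY_sub hG hab dab hy).1)⟩

lemma pt_comm {a b : G.L} (hab : a ≠ b) (dab : G.dag a b) : G.pt a b = G.pt b a := by
  obtain ⟨y, hy⟩ := hG.sigY_nonempty a b hab dab
  have hy' : y ∈ G.SigY b a := by rw [← hG.sigY_symm a b]; exact hy
  rw [hG.pt_spec a b hab dab y hy, hG.pt_spec b a hab.symm (G.dag_symm dab) y hy']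
  ext x; rw [mem_perp_triple, mem_perp_triple]; tauto

lemma pl_comm {a b : G.L} (hab : a ≠ b) (dab : G.dag a b) : G.pl a b = G.pl b a := by
  obtain ⟨m, hm⟩ := hG.sigM_nonempty a b hab dab
  have hm' : m ∈ G.SigM b a := by rw [← hG.sigM_symm a b]; exact hm
  rw [hG.pl_spec a b hab dab m hm, hG.pl_spec b a hab.symm (G.dag_symm dab) m hm']
  ext x; rw [mem_perp_triple, mem_perp_triple]; tauto

lemma pt_ne_pl {x y u v : G.L} (hxy : x ≠ y) (dxy : G.dag x y)
    (huv : u ≠ v) (duv : G.dag u v) : G.pt x y ≠ G.pl u v := by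
  intro heq
  obtain ⟨c, hc⟩ := hG.sigY_nonempty x y hxy dxy
  obtain ⟨p1, q1, h1, h2, r1, hr1, hdisj⟩ := hG.ax3 x y hxy dxy c (sigY_sub hG hxy dxy hc)
  have hr1' : r1 ∈ G.SigY p1 q1 ∪ G.SigM p1 q1 := by
    rw [hG.sig_union p1 q1 h1 h2]; exact hr1
  rcases hr1' with hr1' | hr1'
  · obtain ⟨z, hz1, hz2⟩ := (hG.ax4 x y p1 q1 hxy dxy h1 h2).1
    rw [hG.pt_spec x y hxy dxy c hc] at hz1
    rw [hG.pt_spec p1 q1 h1 h2 r1 hr1'] at hz2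
    exact absurd (Set.mem_inter hz1 hz2) (by rw [hdisj]; exact Set.notMem_empty z)
  · obtain ⟨z, hz1, hz2⟩ := (hG.ax4 u v p1 q1 huv duv h1 h2).2
    rw [← heq, hG.pt_spec x y hxy dxy c hc] at hz1
    rw [hG.pl_spec p1 q1 h1 h2 r1 hr1'] at hz2
    exact absurd (Set.mem_inter hz1 hz2) (by rw [hdisj]; exact Set.notMem_empty z)

/-- Lemma C for points: a triple in a point-star with `w ∈ Sig s t` pins down the point. -/
lemma pt_eq_of_sig {u v s t w : G.L} (huv : u ≠ v) (duv : G.dag u v)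
    (hs : s ∈ G.pt u v) (ht : t ∈ G.pt u v) (hst : s ≠ t)
    (hw : w ∈ G.pt u v) (hwsig : w ∈ G.Sig s t) :
    w ∈ G.SigY s t ∧ G.pt s t = G.pt u v := by
  have dst : G.dag s t := pt_pair_dag hG huv duv hs ht
  obtain ⟨y, hy⟩ := hG.sigY_nonempty u v huv duv
  have hptuv := hG.pt_spec u v huv duv y hy
  have hsub1 : G.pt u v ⊆ G.perp {s, t, w} := by
    intro z hz
    rw [mem_perp_triple]
    exact ⟨pt_pair_dag hG huv duv hz hs, pt_pair_dag hG huv duv hz ht,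
      pt_pair_dag hG huv duv hz hw⟩
  have hsub2 : G.perp {s, t, w} ⊆ G.pt u v := by
    intro z hz
    have hall := hG.ax22 s t hst dst w hwsig z hz
    rw [hptuv, mem_perp_triple]
    exact ⟨hall u (hsub1 (left_mem_pt_s8 hG huv duv)),
      hall v (hsub1 (right_mem_pt_s8 hG huv duv)),
      hall y (hsub1 (sigY_mem_pt hG huv duv hy))⟩
  have heq : G.perp {s, t, w} = G.pt u v := Set.Subset.antisymm hsub2 hsub1
  have hwY : w ∈ G.SigY s t := by
    have : w ∈ G.SigY s t ∪ G.SigM s t := by rw [hG.sig_union s t hst dst]; exact hwsig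
    rcases this with h | h
    · exact h
    · exact absurd ((hG.pl_spec s t hst dst w h).trans heq).symm (pt_ne_pl hG huv duv hst dst)
  exact ⟨hwY, (hG.pt_spec s t hst dst w hwY).trans heq⟩

/-- Lemma C for planes. -/
lemma pl_eq_of_sig {u v s t w : G.L} (huv : u ≠ v) (duv : G.dag u v)
    (hs : s ∈ G.pl u v) (ht : t ∈ G.pl u v) (hst : s ≠ t)
    (hw : w ∈ G.pl u v) (hwsig : w ∈ G.Sig s t) :
    w ∈ G.SigM s t ∧ G.pl s t = G.pl u v := by
  have dst : G.dag s t := pl_pair_dag hG huv duv hs ht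
  obtain ⟨m, hm⟩ := hG.sigM_nonempty u v huv duv
  have hpluv := hG.pl_spec u v huv duv m hm
  have hsub1 : G.pl u v ⊆ G.perp {s, t, w} := by
    intro z hz
    rw [mem_perp_triple]
    exact ⟨pl_pair_dag hG huv duv hz hs, pl_pair_dag hG huv duv hz ht,
      pl_pair_dag hG huv duv hz hw⟩
  have hsub2 : G.perp {s, t, w} ⊆ G.pl u v := by
    intro z hz
    have hall := hG.ax22 s t hst dst w hwsig z hz
    rw [hpluv, mem_perp_triple]
    exact ⟨hall u (hsub1 (left_mem_pl hG huv duv)),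
      hall v (hsub1 (right_mem_pl hG huv duv)),
      hall m (hsub1 (sigM_mem_pl hG huv duv hm))⟩
  have heq : G.perp {s, t, w} = G.pl u v := Set.Subset.antisymm hsub2 hsub1
  have hwM : w ∈ G.SigM s t := by
    have : w ∈ G.SigY s t ∪ G.SigM s t := by rw [hG.sig_union s t hst dst]; exact hwsig
    rcases this with h | h
    · exact absurd ((hG.pt_spec s t hst dst w h).trans heq) (pt_ne_pl hG hst dst huv duv)
    · exact h
  exact ⟨hwM, (hG.pl_spec s t hst dst w hwM).trans heq⟩

/-- Lemma F for points: a point-star is not contained in `perp (perp {s,t})`. -/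
lemma exists_sig_pt {u v s t : G.L} (huv : u ≠ v) (duv : G.dag u v)
    (hs : s ∈ G.pt u v) (ht : t ∈ G.pt u v) (hst : s ≠ t) :
    ∃ w ∈ G.pt u v, w ∈ G.Sig s t := by
  have dst : G.dag s t := pt_pair_dag hG huv duv hs ht
  by_contra hno
  push_neg at hno
  obtain ⟨y, hy⟩ := hG.sigY_nonempty s t hst dst
  have hysig := sigY_sub hG hst dst hy
  have hdagy : ∀ w ∈ G.pt u v, G.dag w y := by
    intro w hw
    have hwperp : w ∈ G.perp {s, t} :=
      mem_perp_pair.mpr ⟨pt_pair_dag hG huv duv hw hs, pt_pair_dag hG huv duv hw ht⟩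
    have hw2 : w ∈ G.perp (G.perp {s, t}) := by
      by_contra hw2
      exact hno w hw ⟨hwperp, hw2⟩
    exact hw2 y hysig.1
  obtain ⟨c, hc⟩ := hG.sigY_nonempty u v huv duv
  have hyin : y ∈ G.pt u v := by
    rw [hG.pt_spec u v huv duv c hc, mem_perp_triple]
    exact ⟨G.dag_symm (hdagy u (left_mem_pt_s8 hG huv duv)),
      G.dag_symm (hdagy v (right_mem_pt_s8 hG huv duv)),
      G.dag_symm (hdagy c (sigY_mem_pt hG huv duv hc))⟩
  exact hno y hyin hysig

/-- Lemma F for planes. -/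
lemma exists_sig_pl {u v s t : G.L} (huv : u ≠ v) (duv : G.dag u v)
    (hs : s ∈ G.pl u v) (ht : t ∈ G.pl u v) (hst : s ≠ t) :
    ∃ w ∈ G.pl u v, w ∈ G.Sig s t := by
  have dst : G.dag s t := pl_pair_dag hG huv duv hs ht
  by_contra hno
  push_neg at hno
  obtain ⟨y, hy⟩ := hG.sigY_nonempty s t hst dst
  have hysig := sigY_sub hG hst dst hy
  have hdagy : ∀ w ∈ G.pl u v, G.dag w y := by
    intro w hw
    have hwperp : w ∈ G.perp {s, t} :=
      mem_perp_pair.mpr ⟨pl_pair_dag hG huv duv hw hs, pl_pair_dag hG huv duv hw ht⟩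
    have hw2 : w ∈ G.perp (G.perp {s, t}) := by
      by_contra hw2
      exact hno w hw ⟨hwperp, hw2⟩
    exact hw2 y hysig.1
  obtain ⟨c, hc⟩ := hG.sigM_nonempty u v huv duv
  have hyin : y ∈ G.pl u v := by
    rw [hG.pl_spec u v huv duv c hc, mem_perp_triple]
    exact ⟨G.dag_symm (hdagy u (left_mem_pl hG huv duv)),
      G.dag_symm (hdagy v (right_mem_pl hG huv duv)),
      G.dag_symm (hdagy c (sigM_mem_pl hG huv duv hc))⟩
  exact hno y hyin hysig

/-- Two distinct lines of a point-star regenerate the point. -/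
lemma pt_eq_of_mem {u v s t : G.L} (huv : u ≠ v) (duv : G.dag u v)
    (hst : s ≠ t) (hs : s ∈ G.pt u v) (ht : t ∈ G.pt u v) : G.pt s t = G.pt u v := by
  obtain ⟨w, hw, hwsig⟩ := exists_sig_pt hG huv duv hs ht hst
  exact (pt_eq_of_sig hG huv duv hs ht hst hw hwsig).2

/-- Two distinct lines of a plane regenerate the plane. -/
lemma pl_eq_of_mem {u v s t : G.L} (huv : u ≠ v) (duv : G.dag u v)
    (hst : s ≠ t) (hs : s ∈ G.pl u v) (ht : t ∈ G.pl u v) : G.pl s t = G.pl u v := by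
  obtain ⟨w, hw, hwsig⟩ := exists_sig_pl hG huv duv hs ht hst
  exact (pl_eq_of_sig hG huv duv hs ht hst hw hwsig).2

/-- A triple in a point-star, with `w` not in the plane `s ⊓ t`, certifies `w ∈ Σ_⋎(s,t)`. -/
lemma mem_sigY_of_point {u v s t w : G.L} (huv : u ≠ v) (duv : G.dag u v)
    (hs : s ∈ G.pt u v) (ht : t ∈ G.pt u v) (hst : s ≠ t)
    (hw : w ∈ G.pt u v) (hnpl : w ∉ G.pl s t) : w ∈ G.SigY s t := by
  have dst : G.dag s t := pt_pair_dag hG huv duv hs ht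
  have hwperp : w ∈ G.perp {s, t} :=
    mem_perp_pair.mpr ⟨pt_pair_dag hG huv duv hw hs, pt_pair_dag hG huv duv hw ht⟩
  exact (pt_eq_of_sig hG huv duv hs ht hst hw
    (mem_sig_of_not_pl hG hst dst hwperp hnpl)).1

/-- A triple in a plane, with `w` not through the point `s ⋎ t`, certifies `w ∈ Σ_⊓(s,t)`. -/
lemma mem_sigM_of_plane {u v s t w : G.L} (huv : u ≠ v) (duv : G.dag u v)
    (hs : s ∈ G.pl u v) (ht : t ∈ G.pl u v) (hst : s ≠ t)
    (hw : w ∈ G.pl u v) (hnpt : w ∉ G.pt s t) : w ∈ G.SigM s t := by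
  have dst : G.dag s t := pl_pair_dag hG huv duv hs ht
  have hwperp : w ∈ G.perp {s, t} :=
    mem_perp_pair.mpr ⟨pl_pair_dag hG huv duv hw hs, pl_pair_dag hG huv duv hw ht⟩
  exact (pl_eq_of_sig hG huv duv hs ht hst hw
    (mem_sig_of_not_pt hG hst dst hwperp hnpt)).1

/-- Two planes through `x` sharing a further line `s ≠ x` coincide; this is
impossible when the second generator of the first plane passes through `x ⋎ y`. -/
lemma pl_collapse {x y z s : G.L} (hxy : x ≠ y) (dxy : G.dag x y)
    (hxz : x ≠ z) (dxz : G.dag x z) (hzY : z ∈ G.SigY x y)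
    (hs1 : s ∈ G.pl x y) (hs2 : s ∈ G.pl x z) (hsx : s ≠ x) : False := by
  have h1 : G.pl x s = G.pl x y :=
    pl_eq_of_mem hG hxy dxy hsx.symm (left_mem_pl hG hxy dxy) hs1
  have h2 : G.pl x s = G.pl x z :=
    pl_eq_of_mem hG hxz dxz hsx.symm (left_mem_pl hG hxz dxz) hs2
  have hz : z ∈ G.pl x y := by
    rw [← h1, h2]; exact right_mem_pl hG hxz dxz
  exact sigY_not_mem_pl hG hxy dxy hzY hz

/-- A line incident to two lines of a plane but not lying in the plane passes
through their common point. -/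
lemma mem_pt_of_plane {w1 w2 s t x : G.L} (hw : w1 ≠ w2) (dw : G.dag w1 w2)
    (hs : s ∈ G.pl w1 w2) (ht : t ∈ G.pl w1 w2) (hst : s ≠ t)
    (hx1 : G.dag x s) (hx2 : G.dag x t) (hxpi : x ∉ G.pl w1 w2) : x ∈ G.pt s t := by
  have dst : G.dag s t := pl_pair_dag hG hw dw hs ht
  have hplst : G.pl s t = G.pl w1 w2 := pl_eq_of_mem hG hw dw hst hs ht
  have hxperp : x ∈ G.perp {s, t} := mem_perp_pair.mpr ⟨hx1, hx2⟩
  rw [perp_pair_eq_union hG hst dst] at hxperp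
  rcases hxperp with h | h
  · exact h
  · exact absurd (hplst ▸ h) hxpi

/-- Lemma H: a line through two distinct points of a plane lies in the plane. -/
lemma mem_plane_of_two_pts {w1 w2 e f g k d : G.L} (hw : w1 ≠ w2) (dw : G.dag w1 w2)
    (he : e ∈ G.pl w1 w2) (hf : f ∈ G.pl w1 w2) (hg : g ∈ G.pl w1 w2)
    (hk : k ∈ G.pl w1 w2) (hef : e ≠ f) (hgk : g ≠ k) (heg : e ≠ g)
    (hd1 : d ∈ G.pt e f) (hd2 : d ∈ G.pt g k)
    (hne1 : e ∉ G.pt g k) (hne2 : g ∉ G.pt e f) : d ∈ G.pl w1 w2 := by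
  have def' : G.dag e f := pl_pair_dag hG hw dw he hf
  have dgk : G.dag g k := pl_pair_dag hG hw dw hg hk
  have hde : d ≠ e := fun h => hne1 (h ▸ hd2)
  have hdg : d ≠ g := fun h => hne2 (h ▸ hd1)
  have dde : G.dag d e := pt_pair_dag hG hef def' hd1 (left_mem_pt_s8 hG hef def')
  have hgperp : g ∈ G.perp {d, e} := mem_perp_pair.mpr
    ⟨G.dag_symm (pt_pair_dag hG hgk dgk hd2 (left_mem_pt_s8 hG hgk dgk)),
      pl_pair_dag hG hw dw hg he⟩
  rw [perp_pair_eq_union hG hde dde] at hgperp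
  rcases hgperp with hcase | hcase
  · exfalso
    have h1 : G.pt d g = G.pt d e :=
      pt_eq_of_mem hG hde dde hdg (left_mem_pt_s8 hG hde dde) hcase
    have h2 : G.pt d g = G.pt g k := pt_eq_of_mem hG hgk dgk hdg hd2 (left_mem_pt_s8 hG hgk dgk)
    have : e ∈ G.pt g k := by
      rw [← h2, h1]; exact right_mem_pt_s8 hG hde dde
    exact hne1 this
  · have h1 : G.pl e g = G.pl d e :=
      pl_eq_of_mem hG hde dde heg (right_mem_pl hG hde dde) hcase
    have h2 : G.pl e g = G.pl w1 w2 := pl_eq_of_mem hG hw dw heg he hg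
    have : d ∈ G.pl d e := left_mem_pl hG hde dde
    rwa [← h1, h2] at this

/-- Uniqueness part for diagonal points: two opposite-side points of a
quadrilateral in a plane disjoint from the star `pt x y` meet in one line. -/
lemma pt_inter_unique {x y w1 w2 s t u v wA wB : G.L}
    (hxy : x ≠ y) (dxy : G.dag x y) (hw : w1 ≠ w2) (dw : G.dag w1 w2)
    (hs : s ∈ G.pl w1 w2) (ht : t ∈ G.pl w1 w2) (hu : u ∈ G.pl w1 w2)
    (hv : v ∈ G.pl w1 w2) (hst : s ≠ t) (huv : u ≠ v)
    (hwA : wA ∈ G.pt s t) (hwB : wB ∈ G.pt u v)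
    (hwAX : wA ∈ G.pt x y) (hwBX : wB ∈ G.pt x y) (hAB : wA ≠ wB)
    (hdis : ∀ z ∈ G.pt x y, z ∉ G.pl w1 w2) :
    ∃ d, G.pt s t ∩ G.pt u v = {d} := by
  have dst : G.dag s t := pl_pair_dag hG hw dw hs ht
  have duv : G.dag u v := pl_pair_dag hG hw dw hu hv
  obtain ⟨d, hd⟩ := (hG.ax4 s t u v hst dst huv duv).1
  refine ⟨d, Set.eq_singleton_iff_unique_mem.mpr ⟨hd, fun z hz => ?_⟩⟩
  by_contra hne
  have h1 : G.pt z d = G.pt s t := pt_eq_of_mem hG hst dst hne hz.1 hd.1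
  have h2 : G.pt z d = G.pt u v := pt_eq_of_mem hG huv duv hne hz.2 hd.2
  have heq : G.pt s t = G.pt u v := h1 ▸ h2
  have h3 : G.pt wA wB = G.pt s t := pt_eq_of_mem hG hst dst hAB hwA (heq ▸ hwB)
  have h4 : G.pt wA wB = G.pt x y := pt_eq_of_mem hG hxy dxy hAB hwAX hwBX
  have hsin : s ∈ G.pt x y := by
    rw [← h4, h3]; exact left_mem_pt_s8 hG hst dst
  exact hdis s hsin hs


/-- Non-concurrency: the third side of a quadrilateral does not pass through the
point cut out by two other sides, given witnesses in a disjoint star. -/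
lemma not_mem_pt_third {x y w1 w2 s t u wA wB : G.L}
    (hxy : x ≠ y) (dxy : G.dag x y) (hw : w1 ≠ w2) (dw : G.dag w1 w2)
    (hs : s ∈ G.pl w1 w2) (ht : t ∈ G.pl w1 w2) (hu : u ∈ G.pl w1 w2)
    (hst : s ≠ t) (hsu : s ≠ u)
    (hwA : wA ∈ G.pt s t) (hwB : wB ∈ G.pt s u)
    (hwAX : wA ∈ G.pt x y) (hwBX : wB ∈ G.pt x y) (hAB : wA ≠ wB)
    (hdis : ∀ z ∈ G.pt x y, z ∉ G.pl w1 w2) : u ∉ G.pt s t := by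
  intro hu'
  have dst : G.dag s t := pl_pair_dag hG hw dw hs ht
  have dsu : G.dag s u := pl_pair_dag hG hw dw hs hu
  have h1 : G.pt s u = G.pt s t := pt_eq_of_mem hG hst dst hsu (left_mem_pt_s8 hG hst dst) hu'
  have hwB' : wB ∈ G.pt s t := h1 ▸ hwB
  have h3 : G.pt wA wB = G.pt s t := pt_eq_of_mem hG hst dst hAB hwA hwB'
  have h4 : G.pt wA wB = G.pt x y := pt_eq_of_mem hG hxy dxy hAB hwAX hwBX
  have hsin : s ∈ G.pt x y := by
    rw [← h4, h3]; exact left_mem_pt_s8 hG hst dst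
  exact hdis s hsin hs

end LineGeom
/-- [H_⊓] implies [H_⋎]. -/
theorem stmt_8 (G : LineGeom) (hG : G.Axioms) (h : G.HM) : G.HY := by
  intro o p q r a b c hT ha hb hc
  obtain ⟨T1, T2, T3, T4⟩ := hT
  obtain ⟨hpq, hqr, hpr, dpq, dqr, dpr, hpY_qr, hqY_rp, hrY_pq⟩ := T1
  obtain ⟨hoq, -, hor, doq, -, dor, hoY_qr, hqY_ro, hrY_oq⟩ := T2
  obtain ⟨-, hrp, hop, -, drp, dop, hoY_rp, hrY_po, hpY_or⟩ := T3
  obtain ⟨-, -, -, -, -, -, hoY_pq, hpY_qo, hqY_op⟩ := T4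
  -- symmetric membership facts
  have hrY_op : r ∈ G.SigY o p := by rw [hG.sigY_symm]; exact hrY_po
  have hpY_oq : p ∈ G.SigY o q := by rw [hG.sigY_symm]; exact hpY_qo
  have hqY_or : q ∈ G.SigY o r := by rw [hG.sigY_symm]; exact hqY_ro
  have hoY_qr' : o ∈ G.SigY r q := by rw [hG.sigY_symm]; exact hoY_qr
  have hpY_rq : p ∈ G.SigY r q := by rw [hG.sigY_symm]; exact hpY_qr
  -- the lines a, b, c lie in the relevant planes
  have hain : a ∈ G.pl o p ∩ G.pl q r := by rw [ha]; rfl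
  have hbin : b ∈ G.pl o q ∩ G.pl r p := by rw [hb]; rfl
  have hcin : c ∈ G.pl o r ∩ G.pl p q := by rw [hc]; rfl
  obtain ⟨haop, haqr⟩ := hain
  obtain ⟨hboq, hbrp⟩ := hbin
  obtain ⟨hcor, hcpq⟩ := hcin
  -- the common point Π = pt o p contains all seven lines
  have hPt : G.pt o p = G.perp {o, p, q} := hG.pt_spec o p hop dop q hqY_op
  have memPi : ∀ x : G.L, G.dag x o → G.dag x p → G.dag x q → x ∈ G.pt o p := by
    intro x h1 h2 h3; rw [hPt, mem_perp_triple]; exact ⟨h1, h2, h3⟩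
  have oPi : o ∈ G.pt o p := left_mem_pt_s8 hG hop dop
  have pPi : p ∈ G.pt o p := right_mem_pt_s8 hG hop dop
  have qPi : q ∈ G.pt o p := memPi q (G.dag_symm doq) (G.dag_symm dpq) (G.dag_refl q)
  have rPi : r ∈ G.pt o p := memPi r (G.dag_symm dor) drp (G.dag_symm dqr)
  have dao : G.dag a o := pl_pair_dag hG hop dop haop (left_mem_pl hG hop dop)
  have dap : G.dag a p := pl_pair_dag hG hop dop haop (right_mem_pl hG hop dop)
  have daq : G.dag a q := pl_pair_dag hG hqr dqr haqr (left_mem_pl hG hqr dqr)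
  have dar : G.dag a r := pl_pair_dag hG hqr dqr haqr (right_mem_pl hG hqr dqr)
  have dbo : G.dag b o := pl_pair_dag hG hoq doq hboq (left_mem_pl hG hoq doq)
  have dbq : G.dag b q := pl_pair_dag hG hoq doq hboq (right_mem_pl hG hoq doq)
  have dbr : G.dag b r := pl_pair_dag hG hrp drp hbrp (left_mem_pl hG hrp drp)
  have dbp : G.dag b p := pl_pair_dag hG hrp drp hbrp (right_mem_pl hG hrp drp)
  have dco : G.dag c o := pl_pair_dag hG hor dor hcor (left_mem_pl hG hor dor)
  have dcr : G.dag c r := pl_pair_dag hG hor dor hcor (right_mem_pl hG hor dor)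
  have dcp : G.dag c p := pl_pair_dag hG hpq dpq hcpq (left_mem_pl hG hpq dpq)
  have dcq : G.dag c q := pl_pair_dag hG hpq dpq hcpq (right_mem_pl hG hpq dpq)
  have aPi : a ∈ G.pt o p := memPi a dao dap daq
  have bPi : b ∈ G.pt o p := memPi b dbo dbp dbq
  have cPi : c ∈ G.pt o p := memPi c dco dcp dcq
  have dab : G.dag a b := pt_pair_dag hG hop dop aPi bPi
  have dbc : G.dag b c := pt_pair_dag hG hop dop bPi cPi
  have dac : G.dag a c := pt_pair_dag hG hop dop aPi cPi
  -- distinctness of the seven lines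
  have hao : a ≠ o := fun hh => sigY_not_mem_pl hG hqr dqr hoY_qr (hh ▸ haqr)
  have hap : a ≠ p := fun hh => sigY_not_mem_pl hG hqr dqr hpY_qr (hh ▸ haqr)
  have haq : a ≠ q := fun hh => sigY_not_mem_pl hG hop dop hqY_op (hh ▸ haop)
  have har : a ≠ r := fun hh => sigY_not_mem_pl hG hop dop hrY_op (hh ▸ haop)
  have hbo : b ≠ o := fun hh => sigY_not_mem_pl hG hrp drp hoY_rp (hh ▸ hbrp)
  have hbp : b ≠ p := fun hh => sigY_not_mem_pl hG hoq doq hpY_oq (hh ▸ hboq)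
  have hbq : b ≠ q := fun hh => sigY_not_mem_pl hG hrp drp hqY_rp (hh ▸ hbrp)
  have hbr : b ≠ r := fun hh => sigY_not_mem_pl hG hoq doq hrY_oq (hh ▸ hboq)
  have hco : c ≠ o := fun hh => sigY_not_mem_pl hG hpq dpq hoY_pq (hh ▸ hcpq)
  have hcp : c ≠ p := fun hh => sigY_not_mem_pl hG hor dor hpY_or (hh ▸ hcor)
  have hcq : c ≠ q := fun hh => sigY_not_mem_pl hG hor dor hqY_or (hh ▸ hcor)
  have hcr : c ≠ r := fun hh => sigY_not_mem_pl hG hpq dpq hrY_pq (hh ▸ hcpq)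
  have hab : a ≠ b := by
    intro hh
    have haoq : a ∈ G.pl o q := by rw [hh]; exact hboq
    exact pl_collapse hG hop dop hoq doq hqY_op haop haoq hao
  have hac : a ≠ c := by
    intro hh
    have haor : a ∈ G.pl o r := by rw [hh]; exact hcor
    exact pl_collapse hG hop dop hor dor hrY_op haop haor hao
  have hbc : b ≠ c := by
    intro hh
    have hbor : b ∈ G.pl o r := by rw [hh]; exact hcor
    exact pl_collapse hG hoq doq hor dor hrY_oq hboq hbor hbo
  -- construct an auxiliary plane π = pl w1 w2 disjoint from the star Π
  obtain ⟨w1, w2, hw12, dw12, hdis⟩ :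
      ∃ w1 w2 : G.L, w1 ≠ w2 ∧ G.dag w1 w2 ∧ ∀ z ∈ G.pt o p, z ∉ G.pl w1 w2 := by
    obtain ⟨w1, w2, hw12, dw12, r', hr'sig, hdisj0⟩ :=
      hG.ax3 o p hop dop q (sigY_sub hG hop dop hqY_op)
    have hr' : r' ∈ G.SigY w1 w2 ∪ G.SigM w1 w2 := by
      rw [hG.sig_union w1 w2 hw12 dw12]; exact hr'sig
    rcases hr' with hr' | hr'
    · exfalso
      obtain ⟨z, hz1, hz2⟩ := (hG.ax4 o p w1 w2 hop dop hw12 dw12).1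
      rw [hPt] at hz1
      rw [hG.pt_spec w1 w2 hw12 dw12 r' hr'] at hz2
      have : z ∈ G.perp {o, p, q} ∩ G.perp {w1, w2, r'} := ⟨hz1, hz2⟩
      rw [hdisj0] at this; exact this
    · refine ⟨w1, w2, hw12, dw12, ?_⟩
      intro z h1 h2
      rw [hPt] at h1
      rw [hG.pl_spec w1 w2 hw12 dw12 r' hr'] at h2
      have : z ∈ G.perp {o, p, q} ∩ G.perp {w1, w2, r'} := ⟨h1, h2⟩
      rw [hdisj0] at this; exact this
  -- the four sides of the quadrilateral in π
  obtain ⟨l1, hl1op, hl1pi⟩ := (hG.ax4 o p w1 w2 hop dop hw12 dw12).2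
  obtain ⟨l2, hl2qr, hl2pi⟩ := (hG.ax4 q r w1 w2 hqr dqr hw12 dw12).2
  obtain ⟨l3, hl3oq, hl3pi⟩ := (hG.ax4 o q w1 w2 hoq doq hw12 dw12).2
  obtain ⟨l4, hl4rp, hl4pi⟩ := (hG.ax4 r p w1 w2 hrp drp hw12 dw12).2
  have hol1 : o ≠ l1 := fun hh => hdis o oPi (hh ▸ hl1pi)
  have hol3 : o ≠ l3 := fun hh => hdis o oPi (hh ▸ hl3pi)
  have hpl1 : p ≠ l1 := fun hh => hdis p pPi (hh ▸ hl1pi)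
  have hpl4 : p ≠ l4 := fun hh => hdis p pPi (hh ▸ hl4pi)
  have hql2 : q ≠ l2 := fun hh => hdis q qPi (hh ▸ hl2pi)
  have hql3 : q ≠ l3 := fun hh => hdis q qPi (hh ▸ hl3pi)
  have hrl2 : r ≠ l2 := fun hh => hdis r rPi (hh ▸ hl2pi)
  have hrl4 : r ≠ l4 := fun hh => hdis r rPi (hh ▸ hl4pi)
  have hal1 : a ≠ l1 := fun hh => hdis a aPi (hh ▸ hl1pi)
  have hal2 : a ≠ l2 := fun hh => hdis a aPi (hh ▸ hl2pi)
  have hbl3 : b ≠ l3 := fun hh => hdis b bPi (hh ▸ hl3pi)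
  have hbl4 : b ≠ l4 := fun hh => hdis b bPi (hh ▸ hl4pi)
  -- distinctness of the four sides
  have hl12 : l1 ≠ l2 := by
    intro hh
    have : l1 ∈ G.pl o p ∩ G.pl q r := ⟨hl1op, by rw [hh]; exact hl2qr⟩
    rw [ha] at this
    exact hdis a aPi (this ▸ hl1pi)
  have hl34 : l3 ≠ l4 := by
    intro hh
    have : l3 ∈ G.pl o q ∩ G.pl r p := ⟨hl3oq, by rw [hh]; exact hl4rp⟩
    rw [hb] at this
    exact hdis b bPi (this ▸ hl3pi)
  have hl13 : l1 ≠ l3 := by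
    intro hh
    have h2 : l1 ∈ G.pl o q := by rw [hh]; exact hl3oq
    exact pl_collapse hG hop dop hoq doq hqY_op hl1op h2 (fun hh2 => hol1 hh2.symm)
  have hl14 : l1 ≠ l4 := by
    intro hh
    have h1 : l1 ∈ G.pl p o := by rw [← pl_comm hG hop dop]; exact hl1op
    have h2 : l1 ∈ G.pl p r := by rw [hh, ← pl_comm hG hrp drp]; exact hl4rp
    exact pl_collapse hG hop.symm (G.dag_symm dop) hpr dpr hrY_po h1 h2
      (fun hh2 => hpl1 hh2.symm)
  have hl23 : l2 ≠ l3 := by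
    intro hh
    have h2 : l2 ∈ G.pl q o := by rw [hh, ← pl_comm hG hoq doq]; exact hl3oq
    exact pl_collapse hG hqr dqr hoq.symm (G.dag_symm doq) hoY_qr hl2qr h2
      (fun hh2 => hql2 hh2.symm)
  have hl24 : l2 ≠ l4 := by
    intro hh
    have h1 : l2 ∈ G.pl r q := by rw [← pl_comm hG hqr dqr]; exact hl2qr
    have h2 : l2 ∈ G.pl r p := by rw [hh]; exact hl4rp
    exact pl_collapse hG hqr.symm (G.dag_symm dqr) hrp drp hpY_rq h1 h2
      (fun hh2 => hrl2 hh2.symm)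
  -- incidences of the seven main lines with the sides
  have dol1 : G.dag o l1 := pl_pair_dag hG hop dop (left_mem_pl hG hop dop) hl1op
  have dol3 : G.dag o l3 := pl_pair_dag hG hoq doq (left_mem_pl hG hoq doq) hl3oq
  have dpl1 : G.dag p l1 := pl_pair_dag hG hop dop (right_mem_pl hG hop dop) hl1op
  have dpl4 : G.dag p l4 := pl_pair_dag hG hrp drp (right_mem_pl hG hrp drp) hl4rp
  have dql2 : G.dag q l2 := pl_pair_dag hG hqr dqr (left_mem_pl hG hqr dqr) hl2qr
  have dql3 : G.dag q l3 := pl_pair_dag hG hoq doq (right_mem_pl hG hoq doq) hl3oq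
  have drl2 : G.dag r l2 := pl_pair_dag hG hqr dqr (right_mem_pl hG hqr dqr) hl2qr
  have drl4 : G.dag r l4 := pl_pair_dag hG hrp drp (left_mem_pl hG hrp drp) hl4rp
  have dal1 : G.dag a l1 := pl_pair_dag hG hop dop haop hl1op
  have dal2 : G.dag a l2 := pl_pair_dag hG hqr dqr haqr hl2qr
  have dbl3 : G.dag b l3 := pl_pair_dag hG hoq doq hboq hl3oq
  have dbl4 : G.dag b l4 := pl_pair_dag hG hrp drp hbrp hl4rp
  -- each vertex point of the quadrilateral
  have hoPt13 : o ∈ G.pt l1 l3 :=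
    mem_pt_of_plane hG hw12 dw12 hl1pi hl3pi hl13 dol1 dol3 (hdis o oPi)
  have hpPt14 : p ∈ G.pt l1 l4 :=
    mem_pt_of_plane hG hw12 dw12 hl1pi hl4pi hl14 dpl1 dpl4 (hdis p pPi)
  have hqPt23 : q ∈ G.pt l2 l3 :=
    mem_pt_of_plane hG hw12 dw12 hl2pi hl3pi hl23 dql2 dql3 (hdis q qPi)
  have hrPt24 : r ∈ G.pt l2 l4 :=
    mem_pt_of_plane hG hw12 dw12 hl2pi hl4pi hl24 drl2 drl4 (hdis r rPi)
  have haPt12 : a ∈ G.pt l1 l2 :=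
    mem_pt_of_plane hG hw12 dw12 hl1pi hl2pi hl12 dal1 dal2 (hdis a aPi)
  have hbPt34 : b ∈ G.pt l3 l4 :=
    mem_pt_of_plane hG hw12 dw12 hl3pi hl4pi hl34 dbl3 dbl4 (hdis b bPi)
  -- commuted versions
  have d12 : G.dag l1 l2 := pl_pair_dag hG hw12 dw12 hl1pi hl2pi
  have d13 : G.dag l1 l3 := pl_pair_dag hG hw12 dw12 hl1pi hl3pi
  have d14 : G.dag l1 l4 := pl_pair_dag hG hw12 dw12 hl1pi hl4pi
  have d23 : G.dag l2 l3 := pl_pair_dag hG hw12 dw12 hl2pi hl3pi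
  have d24 : G.dag l2 l4 := pl_pair_dag hG hw12 dw12 hl2pi hl4pi
  have d34 : G.dag l3 l4 := pl_pair_dag hG hw12 dw12 hl3pi hl4pi
  have haPt21 : a ∈ G.pt l2 l1 := by rw [← pt_comm hG hl12 d12]; exact haPt12
  have hoPt31 : o ∈ G.pt l3 l1 := by rw [← pt_comm hG hl13 d13]; exact hoPt13
  have hqPt32 : q ∈ G.pt l3 l2 := by rw [← pt_comm hG hl23 d23]; exact hqPt23
  have hbPt43 : b ∈ G.pt l4 l3 := by rw [← pt_comm hG hl34 d34]; exact hbPt34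
  -- the twelve non-concurrency facts
  have np13_2 : l2 ∉ G.pt l1 l3 := not_mem_pt_third hG hop dop hw12 dw12
    hl1pi hl3pi hl2pi hl13 hl12 hoPt13 haPt12 oPi aPi (fun hh => hao hh.symm) hdis
  have np13_4 : l4 ∉ G.pt l1 l3 := not_mem_pt_third hG hop dop hw12 dw12
    hl1pi hl3pi hl4pi hl13 hl14 hoPt13 hpPt14 oPi pPi hop hdis
  have np14_2 : l2 ∉ G.pt l1 l4 := not_mem_pt_third hG hop dop hw12 dw12
    hl1pi hl4pi hl2pi hl14 hl12 hpPt14 haPt12 pPi aPi (fun hh => hap hh.symm) hdis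
  have np14_3 : l3 ∉ G.pt l1 l4 := not_mem_pt_third hG hop dop hw12 dw12
    hl1pi hl4pi hl3pi hl14 hl13 hpPt14 hoPt13 pPi oPi hop.symm hdis
  have np23_1 : l1 ∉ G.pt l2 l3 := not_mem_pt_third hG hop dop hw12 dw12
    hl2pi hl3pi hl1pi hl23 (Ne.symm hl12) hqPt23 haPt21 qPi aPi (fun hh => haq hh.symm) hdis
  have np23_4 : l4 ∉ G.pt l2 l3 := not_mem_pt_third hG hop dop hw12 dw12
    hl2pi hl3pi hl4pi hl23 hl24 hqPt23 hrPt24 qPi rPi hqr hdis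
  have np24_1 : l1 ∉ G.pt l2 l4 := not_mem_pt_third hG hop dop hw12 dw12
    hl2pi hl4pi hl1pi hl24 (Ne.symm hl12) hrPt24 haPt21 rPi aPi (fun hh => har hh.symm) hdis
  have np24_3 : l3 ∉ G.pt l2 l4 := not_mem_pt_third hG hop dop hw12 dw12
    hl2pi hl4pi hl3pi hl24 hl23 hrPt24 hqPt23 rPi qPi hqr.symm hdis
  have np34_1 : l1 ∉ G.pt l3 l4 := not_mem_pt_third hG hop dop hw12 dw12
    hl3pi hl4pi hl1pi hl34 (Ne.symm hl13) hbPt34 hoPt31 bPi oPi hbo hdis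
  have np34_2 : l2 ∉ G.pt l3 l4 := not_mem_pt_third hG hop dop hw12 dw12
    hl3pi hl4pi hl2pi hl34 (Ne.symm hl23) hbPt34 hqPt32 bPi qPi hbq hdis
  have np12_3 : l3 ∉ G.pt l1 l2 := not_mem_pt_third hG hop dop hw12 dw12
    hl1pi hl2pi hl3pi hl12 hl13 haPt12 hoPt13 aPi oPi hao hdis
  have np12_4 : l4 ∉ G.pt l1 l2 := not_mem_pt_third hG hop dop hw12 dw12
    hl1pi hl2pi hl4pi hl12 hl14 haPt12 hpPt14 aPi pPi hap hdis
  -- commuted non-concurrency versions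
  have np43_1 : l1 ∉ G.pt l4 l3 := by rw [← pt_comm hG hl34 d34]; exact np34_1
  have np32_1 : l1 ∉ G.pt l3 l2 := by rw [← pt_comm hG hl23 d23]; exact np23_1
  have np43_2 : l2 ∉ G.pt l4 l3 := by rw [← pt_comm hG hl34 d34]; exact np34_2
  have np32_4 : l4 ∉ G.pt l3 l2 := by rw [← pt_comm hG hl23 d23]; exact np23_4
  have np41_3 : l3 ∉ G.pt l4 l1 := by rw [← pt_comm hG hl14 d14]; exact np14_3
  have np21_3 : l3 ∉ G.pt l2 l1 := by rw [← pt_comm hG hl12 d12]; exact np12_3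
  have np31_4 : l4 ∉ G.pt l3 l1 := by rw [← pt_comm hG hl13 d13]; exact np13_4
  have np21_4 : l4 ∉ G.pt l2 l1 := by rw [← pt_comm hG hl12 d12]; exact np12_4
  have np31_2 : l2 ∉ G.pt l3 l1 := by rw [← pt_comm hG hl13 d13]; exact np13_2
  have np41_2 : l2 ∉ G.pt l4 l1 := by rw [← pt_comm hG hl14 d14]; exact np14_2
  have np42_3 : l3 ∉ G.pt l4 l2 := by rw [← pt_comm hG hl24 d24]; exact np24_3
  have np42_1 : l1 ∉ G.pt l4 l2 := by rw [← pt_comm hG hl24 d24]; exact np24_1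
  -- the MTetrad (l1, l3, l2, l4)
  have sigM : ∀ {s t w : G.L}, s ∈ G.pl w1 w2 → t ∈ G.pl w1 w2 → w ∈ G.pl w1 w2 →
      s ≠ t → w ∉ G.pt s t → w ∈ G.SigM s t := by
    intro s t w hs ht hw hst hnpt
    exact mem_sigM_of_plane hG hw12 dw12 hs ht hst hw hnpt
  have MT1 : G.MTriad l3 l2 l4 :=
    ⟨hl23.symm, hl24, hl34, G.dag_symm d23, d24, d34,
      sigM hl2pi hl4pi hl3pi hl24 np24_3,
      sigM hl4pi hl3pi hl2pi (Ne.symm hl34) np43_2,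
      sigM hl3pi hl2pi hl4pi (Ne.symm hl23) np32_4⟩
  have MT2 : G.MTriad l1 l2 l4 :=
    ⟨hl12, hl24, hl14, d12, d24, d14,
      sigM hl2pi hl4pi hl1pi hl24 np24_1,
      sigM hl4pi hl1pi hl2pi (Ne.symm hl14) np41_2,
      sigM hl1pi hl2pi hl4pi hl12 np12_4⟩
  have MT3 : G.MTriad l1 l4 l3 :=
    ⟨hl14, Ne.symm hl34, hl13, d14, G.dag_symm d34, d13,
      sigM hl4pi hl3pi hl1pi (Ne.symm hl34) np43_1,
      sigM hl3pi hl1pi hl4pi (Ne.symm hl13) np31_4,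
      sigM hl1pi hl4pi hl3pi hl14 np14_3⟩
  have MT4 : G.MTriad l1 l3 l2 :=
    ⟨hl13, Ne.symm hl23, hl12, d13, G.dag_symm d23, d12,
      sigM hl3pi hl2pi hl1pi (Ne.symm hl23) np32_1,
      sigM hl2pi hl1pi hl3pi (Ne.symm hl12) np21_3,
      sigM hl1pi hl3pi hl2pi hl13 np13_2⟩
  -- the three diagonal lines
  obtain ⟨d2, hS1⟩ : ∃ d, G.pt l1 l3 ∩ G.pt l2 l4 = {d} :=
    pt_inter_unique hG hop dop hw12 dw12 hl1pi hl3pi hl2pi hl4pi hl13 hl24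
      hoPt13 hrPt24 oPi rPi hor hdis
  obtain ⟨d1, hS2⟩ : ∃ d, G.pt l1 l2 ∩ G.pt l4 l3 = {d} :=
    pt_inter_unique hG hop dop hw12 dw12 hl1pi hl2pi hl4pi hl3pi hl12 (Ne.symm hl34)
      haPt12 hbPt43 aPi bPi hab hdis
  obtain ⟨d3, hS3⟩ : ∃ d, G.pt l1 l4 ∩ G.pt l3 l2 = {d} :=
    pt_inter_unique hG hop dop hw12 dw12 hl1pi hl4pi hl3pi hl2pi hl14 (Ne.symm hl23)
      hpPt14 hqPt32 pPi qPi hpq hdis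
  have hMT : G.MTriad d2 d1 d3 := h l1 l3 l2 l4 d2 d1 d3 ⟨MT1, MT2, MT3, MT4⟩ hS1 hS2 hS3
  obtain ⟨hd21, hd13ne, hd23ne, -, -, -, -, hd1M, -⟩ := hMT
  -- memberships of the diagonals
  have hd2in : d2 ∈ G.pt l1 l3 ∩ G.pt l2 l4 := by rw [hS1]; rfl
  have hd1in : d1 ∈ G.pt l1 l2 ∩ G.pt l4 l3 := by rw [hS2]; rfl
  have hd3in : d3 ∈ G.pt l1 l4 ∩ G.pt l3 l2 := by rw [hS3]; rfl
  have hd1Pt34 : d1 ∈ G.pt l3 l4 := by rw [pt_comm hG hl34 d34]; exact hd1in.2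
  -- the diagonals lie in the plane π
  have hd1pi : d1 ∈ G.pl w1 w2 := mem_plane_of_two_pts hG hw12 dw12
    hl1pi hl2pi hl3pi hl4pi hl12 hl34 hl13 hd1in.1 hd1Pt34 np34_1 np12_3
  have hd2pi : d2 ∈ G.pl w1 w2 := mem_plane_of_two_pts hG hw12 dw12
    hl1pi hl3pi hl2pi hl4pi hl13 hl24 hl12 hd2in.1 hd2in.2 np24_1 np13_2
  have hd3pi : d3 ∈ G.pl w1 w2 := mem_plane_of_two_pts hG hw12 dw12
    hl1pi hl4pi hl3pi hl2pi hl14 (Ne.symm hl23) hl13 hd3in.1 hd3in.2 np32_1 np14_3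
  -- the diagonal d2 is the common line of pl o r and π
  have hd2or : d2 ∈ G.pl o r := by
    obtain ⟨m1, hm1or, hm1pi⟩ := (hG.ax4 o r w1 w2 hor dor hw12 dw12).2
    have hm1o : m1 ≠ o := fun hh => hdis o oPi (hh ▸ hm1pi)
    have hm1r : m1 ≠ r := fun hh => hdis r rPi (hh ▸ hm1pi)
    have hm1Pt13 : m1 ∈ G.pt l1 l3 := by
      have hpt1 : G.pt o l1 = G.pt l1 l3 :=
        pt_eq_of_mem hG hl13 d13 hol1 hoPt13 (left_mem_pt_s8 hG hl13 d13)
      have hm1perp : m1 ∈ G.perp {o, l1} := mem_perp_pair.mpr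
        ⟨pl_pair_dag hG hor dor hm1or (left_mem_pl hG hor dor),
          pl_pair_dag hG hw12 dw12 hm1pi hl1pi⟩
      rw [perp_pair_eq_union hG hol1 dol1] at hm1perp
      rcases hm1perp with hcase | hcase
      · rwa [hpt1] at hcase
      · exfalso
        have hploL1 : G.pl o l1 = G.pl o p :=
          pl_eq_of_mem hG hop dop hol1 (left_mem_pl hG hop dop) hl1op
        rw [hploL1] at hcase
        exact pl_collapse hG hop dop hor dor hrY_op hcase hm1or hm1o
    have hm1Pt24 : m1 ∈ G.pt l2 l4 := by
      have hrl2' : r ≠ l2 := hrl2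
      have drl2' : G.dag r l2 := drl2
      have hpt1 : G.pt r l2 = G.pt l2 l4 :=
        pt_eq_of_mem hG hl24 d24 hrl2' hrPt24 (left_mem_pt_s8 hG hl24 d24)
      have hm1perp : m1 ∈ G.perp {r, l2} := mem_perp_pair.mpr
        ⟨pl_pair_dag hG hor dor hm1or (right_mem_pl hG hor dor),
          pl_pair_dag hG hw12 dw12 hm1pi hl2pi⟩
      rw [perp_pair_eq_union hG hrl2' drl2'] at hm1perp
      rcases hm1perp with hcase | hcase
      · rwa [hpt1] at hcase
      · exfalso
        have hplrL2 : G.pl r l2 = G.pl q r :=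
          pl_eq_of_mem hG hqr dqr hrl2' (right_mem_pl hG hqr dqr) hl2qr
        rw [hplrL2] at hcase
        have h1 : m1 ∈ G.pl r q := by rw [← pl_comm hG hqr dqr]; exact hcase
        have h2 : m1 ∈ G.pl r o := by rw [← pl_comm hG hor dor]; exact hm1or
        exact pl_collapse hG hqr.symm (G.dag_symm dqr) hor.symm (G.dag_symm dor)
          hoY_qr' h1 h2 hm1r
    have : m1 ∈ G.pt l1 l3 ∩ G.pt l2 l4 := ⟨hm1Pt13, hm1Pt24⟩
    rw [hS1] at this
    rw [← this]; exact hm1or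
  -- the diagonal d3 is the common line of pl p q and π
  have hd3pq : d3 ∈ G.pl p q := by
    obtain ⟨m2, hm2pq, hm2pi⟩ := (hG.ax4 p q w1 w2 hpq dpq hw12 dw12).2
    have hm2p : m2 ≠ p := fun hh => hdis p pPi (hh ▸ hm2pi)
    have hm2q : m2 ≠ q := fun hh => hdis q qPi (hh ▸ hm2pi)
    have hm2Pt14 : m2 ∈ G.pt l1 l4 := by
      have hpt1 : G.pt p l1 = G.pt l1 l4 :=
        pt_eq_of_mem hG hl14 d14 hpl1 hpPt14 (left_mem_pt_s8 hG hl14 d14)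
      have hm2perp : m2 ∈ G.perp {p, l1} := mem_perp_pair.mpr
        ⟨pl_pair_dag hG hpq dpq hm2pq (left_mem_pl hG hpq dpq),
          pl_pair_dag hG hw12 dw12 hm2pi hl1pi⟩
      rw [perp_pair_eq_union hG hpl1 dpl1] at hm2perp
      rcases hm2perp with hcase | hcase
      · rwa [hpt1] at hcase
      · exfalso
        have hplpL1 : G.pl p l1 = G.pl o p :=
          pl_eq_of_mem hG hop dop hpl1 (right_mem_pl hG hop dop) hl1op
        rw [hplpL1] at hcase
        have h1 : m2 ∈ G.pl p o := by rw [← pl_comm hG hop dop]; exact hcase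
        exact pl_collapse hG hop.symm (G.dag_symm dop) hpq dpq
          (by rw [hG.sigY_symm]; exact hqY_op) h1 hm2pq hm2p
    have hm2Pt32 : m2 ∈ G.pt l3 l2 := by
      have hqPt32' := hqPt32
      have d32 : G.dag l3 l2 := G.dag_symm d23
      have hpt1 : G.pt q l3 = G.pt l3 l2 :=
        pt_eq_of_mem hG (Ne.symm hl23) d32 hql3 hqPt32' (left_mem_pt_s8 hG (Ne.symm hl23) d32)
      have hm2perp : m2 ∈ G.perp {q, l3} := mem_perp_pair.mpr
        ⟨pl_pair_dag hG hpq dpq hm2pq (right_mem_pl hG hpq dpq),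
          pl_pair_dag hG hw12 dw12 hm2pi hl3pi⟩
      rw [perp_pair_eq_union hG hql3 dql3] at hm2perp
      rcases hm2perp with hcase | hcase
      · rwa [hpt1] at hcase
      · exfalso
        have hplqL3 : G.pl q l3 = G.pl o q :=
          pl_eq_of_mem hG hoq doq hql3 (right_mem_pl hG hoq doq) hl3oq
        rw [hplqL3] at hcase
        have h1 : m2 ∈ G.pl q o := by rw [← pl_comm hG hoq doq]; exact hcase
        have h2 : m2 ∈ G.pl q p := by rw [← pl_comm hG hpq dpq]; exact hm2pq
        exact pl_collapse hG hoq.symm (G.dag_symm doq) hpq.symm (G.dag_symm dpq)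
          hpY_qo h1 h2 hm2q
    have : m2 ∈ G.pt l1 l4 ∩ G.pt l3 l2 := ⟨hm2Pt14, hm2Pt32⟩
    rw [hS3] at this
    rw [← this]; exact hm2pq
  -- hence c is incident with d2 and d3 and passes through their point
  have dcd2 : G.dag c d2 := pl_pair_dag hG hor dor hcor hd2or
  have dcd3 : G.dag c d3 := pl_pair_dag hG hpq dpq hcpq hd3pq
  have dd23 : G.dag d2 d3 := pl_pair_dag hG hw12 dw12 hd2pi hd3pi
  have hcd2 : c ≠ d2 := fun hh => hdis c cPi (hh ▸ hd2pi)
  have hcd3 : c ≠ d3 := fun hh => hdis c cPi (hh ▸ hd3pi)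
  have hcPt23 : c ∈ G.pt d2 d3 := by
    have hcperp : c ∈ G.perp {d2, d3} := mem_perp_pair.mpr ⟨dcd2, dcd3⟩
    rw [perp_pair_eq_union hG hd23ne dd23] at hcperp
    rcases hcperp with hcase | hcase
    · exact hcase
    · exfalso
      have : G.pl d2 d3 = G.pl w1 w2 := pl_eq_of_mem hG hw12 dw12 hd23ne hd2pi hd3pi
      rw [this] at hcase
      exact hdis c cPi hcase
  -- core (Fano) step: a does not lie in the plane pl b c
  have hanpl : a ∉ G.pl b c := by
    intro hacon
    -- the common line n of pl b c and π
    obtain ⟨n, hnbc, hnpi⟩ := (hG.ax4 b c w1 w2 hbc dbc hw12 dw12).2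
    have hna : n ≠ a := fun hh => hdis a aPi (hh ▸ hnpi)
    have hnb : n ≠ b := fun hh => hdis b bPi (hh ▸ hnpi)
    -- n passes through the point a ⋎ l1 = l1 ⋎ l2
    have hnPt12 : n ∈ G.pt l1 l2 := by
      have hpt1 : G.pt a l1 = G.pt l1 l2 :=
        pt_eq_of_mem hG hl12 d12 hal1 haPt12 (left_mem_pt_s8 hG hl12 d12)
      have hnperp : n ∈ G.perp {a, l1} := mem_perp_pair.mpr
        ⟨pl_pair_dag hG hbc dbc hnbc hacon,
          pl_pair_dag hG hw12 dw12 hnpi hl1pi⟩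
      rw [perp_pair_eq_union hG hal1 dal1] at hnperp
      rcases hnperp with hcase | hcase
      · rwa [hpt1] at hcase
      · exfalso
        have hplaL1 : G.pl a l1 = G.pl o p :=
          pl_eq_of_mem hG hop dop hal1 haop hl1op
        rw [hplaL1] at hcase
        have h1 : G.pl n a = G.pl o p :=
          pl_eq_of_mem hG hop dop hna hcase haop
        have h2 : G.pl n a = G.pl b c :=
          pl_eq_of_mem hG hbc dbc hna hnbc hacon
        have hbop : b ∈ G.pl o p := by
          rw [h2] at h1; rw [← h1]; exact left_mem_pl hG hbc dbc
        exact pl_collapse hG hop dop hoq doq hqY_op hbop hboq hbo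
    -- n passes through the point b ⋎ l3 = l4 ⋎ l3
    have hnPt43 : n ∈ G.pt l4 l3 := by
      have d34' : G.dag l3 l4 := d34
      have hpt1 : G.pt b l3 = G.pt l3 l4 :=
        pt_eq_of_mem hG hl34 d34' hbl3 hbPt34 (left_mem_pt_s8 hG hl34 d34')
      have hnperp : n ∈ G.perp {b, l3} := mem_perp_pair.mpr
        ⟨pl_pair_dag hG hbc dbc hnbc (left_mem_pl hG hbc dbc),
          pl_pair_dag hG hw12 dw12 hnpi hl3pi⟩
      rw [perp_pair_eq_union hG hbl3 dbl3] at hnperp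
      rcases hnperp with hcase | hcase
      · rw [hpt1] at hcase
        rwa [pt_comm hG hl34 d34] at hcase
      · exfalso
        have hplbL3 : G.pl b l3 = G.pl o q :=
          pl_eq_of_mem hG hoq doq hbl3 hboq hl3oq
        rw [hplbL3] at hcase
        have h1 : G.pl n b = G.pl o q :=
          pl_eq_of_mem hG hoq doq hnb hcase hboq
        have h2 : G.pl n b = G.pl b c :=
          pl_eq_of_mem hG hbc dbc hnb hnbc (left_mem_pl hG hbc dbc)
        have hcoq : c ∈ G.pl o q := by
          rw [h2] at h1; rw [← h1]; exact right_mem_pl hG hbc dbc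
        exact pl_collapse hG hoq doq hor dor hrY_oq hcoq hcor hco
    -- hence n = d1, so d1 lies in the plane pl b c
    have hnd1 : n = d1 := by
      have : n ∈ G.pt l1 l2 ∩ G.pt l4 l3 := ⟨hnPt12, hnPt43⟩
      rw [hS2] at this; exact this
    have hd1bc : d1 ∈ G.pl b c := hnd1 ▸ hnbc
    -- d1 passes through the point of d2 and d3
    have hd1Ptd : d1 ∈ G.pt d2 d3 := by
      have hpt1 : G.pt c d2 = G.pt d2 d3 :=
        pt_eq_of_mem hG hd23ne dd23 hcd2 hcPt23 (left_mem_pt_s8 hG hd23ne dd23)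
      have hd1perp : d1 ∈ G.perp {c, d2} := mem_perp_pair.mpr
        ⟨pl_pair_dag hG hbc dbc hd1bc (right_mem_pl hG hbc dbc),
          pl_pair_dag hG hw12 dw12 hd1pi hd2pi⟩
      rw [perp_pair_eq_union hG hcd2 dcd2] at hd1perp
      rcases hd1perp with hcase | hcase
      · rwa [hpt1] at hcase
      · exfalso
        have hplcd2 : G.pl c d2 = G.pl o r :=
          pl_eq_of_mem hG hor dor hcd2 hcor hd2or
        rw [hplcd2] at hcase
        have h1 : G.pl d1 d2 = G.pl o r :=
          pl_eq_of_mem hG hor dor (Ne.symm hd21) hcase hd2or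
        have h2 : G.pl d1 d2 = G.pl w1 w2 :=
          pl_eq_of_mem hG hw12 dw12 (Ne.symm hd21) hd1pi hd2pi
        have : o ∈ G.pl w1 w2 := by
          rw [← h2, h1]; exact left_mem_pl hG hor dor
        exact hdis o oPi this
    -- but d1 also lies in the plane of d2 and d3: contradiction with MTriad
    have hd1pl : d1 ∈ G.pl d3 d2 := by
      rw [pl_eq_of_mem hG hw12 dw12 (Ne.symm hd23ne) hd3pi hd2pi]
      exact hd1pi
    have hd1pt : d1 ∈ G.pt d3 d2 := by
      rw [← pt_comm hG hd23ne dd23]; exact hd1Ptd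
    exact not_mem_sig_of_both hG (Ne.symm hd23ne) (G.dag_symm dd23) hd1pt hd1pl
      (sigM_sub hG (Ne.symm hd23ne) (G.dag_symm dd23) hd1M)
  -- transfer to the other two coplanarity statements
  have hbnpl : b ∉ G.pl c a := by
    intro hbca
    have dca : G.dag c a := G.dag_symm dac
    have h1 : G.pl b c = G.pl c a :=
      pl_eq_of_mem hG hac.symm dca hbc hbca (left_mem_pl hG hac.symm dca)
    have : a ∈ G.pl b c := by rw [h1]; exact right_mem_pl hG hac.symm dca
    exact hanpl this
  have hcnpl : c ∉ G.pl a b := by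
    intro hcab
    have h1 : G.pl b c = G.pl a b :=
      pl_eq_of_mem hG hab dab hbc (right_mem_pl hG hab dab) hcab
    have : a ∈ G.pl b c := by rw [h1]; exact left_mem_pl hG hab dab
    exact hanpl this
  exact ⟨hab, hbc, hac, dab, dbc, dac,
    mem_sigY_of_point hG hop dop bPi cPi hbc aPi hanpl,
    mem_sigY_of_point hG hop dop cPi aPi hac.symm bPi hbnpl,
    mem_sigY_of_point hG hop dop aPi bPi hab cPi hcnpl⟩
end
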